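/- arXiv:1509.04555 — 5 statements merged into one kernel-verified Lean document; each statement's English description precedes it below -/
import Mathlib

section
/- (Strong symmetry.) Let X1, X2, X3 be random variables on a common probability space with values in finite sets, and let R be a real-valued function on ordered triples (i,j,k) of distinct elements of {1,2,3} satisfying R(i,j,k) = R(j,i,k) for all distinct i,j,k (weak symmetry I) and R(i,k,j) = R(j,k,i) for all distinct i,j,k (weak symmetry II, equivalently I(Xi;Xj) − R(i,k,j) = I(Xj;Xi) − R(j,k,i)). Then R takes the same value r on all six ordered triples; moreover the synergy S(i,j,k) := I(Xi;Xj|Xk) − (I(Xi;Xj) − r) is independent of the permutation (i,j,k) and equals r − I(X1;X2;X3), where I(X1;X2;X3) is the co-information. -/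
open Finset

/-- A probability mass function on a finite sample space, modelling a probability space
on which finitely-valued random variables are defined. -/
def IsPMF {Ω : Type*} [Fintype Ω] (μ : Ω → ℝ) : Prop :=
  (∀ ω, 0 ≤ μ ω) ∧ ∑ ω, μ ω = 1

/-- The probability that the random variable `X` takes the value `x`. -/
noncomputable def prob {Ω : Type*} [Fintype Ω] {S : Type*} [DecidableEq S]
    (μ : Ω → ℝ) (X : Ω → S) (x : S) : ℝ :=
  ∑ ω, if X ω = x then μ ω else 0

/-- Shannon entropy `H(X)` (natural logarithm). -/
noncomputable def Hent {Ω : Type*} [Fintype Ω] {S : Type*} [Fintype S] [DecidableEq S]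
    (μ : Ω → ℝ) (X : Ω → S) : ℝ :=
  -∑ x, prob μ X x * Real.log (prob μ X x)

/-- Conditional entropy `H(X | Y)`. -/
noncomputable def condEnt {Ω : Type*} [Fintype Ω] {S T : Type*}
    [Fintype S] [DecidableEq S] [Fintype T] [DecidableEq T]
    (μ : Ω → ℝ) (X : Ω → S) (Y : Ω → T) : ℝ :=
  Hent μ (fun ω => (X ω, Y ω)) - Hent μ Y

/-- Mutual information `I(X; Y)`. -/
noncomputable def mi {Ω : Type*} [Fintype Ω] {S T : Type*}
    [Fintype S] [DecidableEq S] [Fintype T] [DecidableEq T]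
    (μ : Ω → ℝ) (X : Ω → S) (Y : Ω → T) : ℝ :=
  Hent μ X + Hent μ Y - Hent μ (fun ω => (X ω, Y ω))

/-- Conditional mutual information `I(X; Y | Z)`. -/
noncomputable def cmi {Ω : Type*} [Fintype Ω] {S T U : Type*}
    [Fintype S] [DecidableEq S] [Fintype T] [DecidableEq T] [Fintype U] [DecidableEq U]
    (μ : Ω → ℝ) (X : Ω → S) (Y : Ω → T) (Z : Ω → U) : ℝ :=
  Hent μ (fun ω => (X ω, Z ω)) + Hent μ (fun ω => (Y ω, Z ω))
    - Hent μ (fun ω => (X ω, Y ω, Z ω)) - Hent μ Z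

section Aux

variable {Ω : Type*} [Fintype Ω]

lemma hent_comp_equiv {S T : Type*} [Fintype S] [DecidableEq S] [Fintype T] [DecidableEq T]
    (μ : Ω → ℝ) (e : S ≃ T) (X : Ω → S) :
    Hent μ (fun ω => e (X ω)) = Hent μ X := by
  unfold Hent
  congr 1
  rw [← Equiv.sum_comp e]
  refine Finset.sum_congr rfl fun x _ => ?_
  have : prob μ (fun ω => e (X ω)) (e x) = prob μ X x := by
    unfold prob
    refine Finset.sum_congr rfl fun ω _ => ?_
    simp
  rw [this]

lemma hent_pair_comm {A B : Type*} [Fintype A] [DecidableEq A] [Fintype B] [DecidableEq B]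
    (μ : Ω → ℝ) (X : Ω → A) (Y : Ω → B) :
    Hent μ (fun ω => (X ω, Y ω)) = Hent μ (fun ω => (Y ω, X ω)) := by
  have := hent_comp_equiv μ (Equiv.prodComm B A) (fun ω => (Y ω, X ω))
  simpa using this

def eSwap12 (A B C : Type*) : A × B × C ≃ B × A × C :=
  ⟨fun p => (p.2.1, p.1, p.2.2), fun p => (p.2.1, p.1, p.2.2),
   fun ⟨_, _, _⟩ => rfl, fun ⟨_, _, _⟩ => rfl⟩

def eSwap23 (A B C : Type*) : A × B × C ≃ A × C × B :=
  ⟨fun p => (p.1, p.2.2, p.2.1), fun p => (p.1, p.2.2, p.2.1),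
   fun ⟨_, _, _⟩ => rfl, fun ⟨_, _, _⟩ => rfl⟩

lemma hent_triple_swap12 {A B C : Type*} [Fintype A] [DecidableEq A] [Fintype B] [DecidableEq B]
    [Fintype C] [DecidableEq C] (μ : Ω → ℝ) (X : Ω → A) (Y : Ω → B) (Z : Ω → C) :
    Hent μ (fun ω => (X ω, Y ω, Z ω)) = Hent μ (fun ω => (Y ω, X ω, Z ω)) := by
  have := hent_comp_equiv μ (eSwap12 B A C) (fun ω => (Y ω, X ω, Z ω))
  simpa [eSwap12] using this

lemma hent_triple_swap23 {A B C : Type*} [Fintype A] [DecidableEq A] [Fintype B] [DecidableEq B]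
    [Fintype C] [DecidableEq C] (μ : Ω → ℝ) (X : Ω → A) (Y : Ω → B) (Z : Ω → C) :
    Hent μ (fun ω => (X ω, Y ω, Z ω)) = Hent μ (fun ω => (X ω, Z ω, Y ω)) := by
  have := hent_comp_equiv μ (eSwap23 A C B) (fun ω => (X ω, Z ω, Y ω))
  simpa [eSwap23] using this

/-- The quantity `I(X;Y|Z) - I(X;Y)` is symmetric in the three variables. -/
lemma cmi_sub_mi_symm {A B C : Type*} [Fintype A] [DecidableEq A] [Fintype B] [DecidableEq B]
    [Fintype C] [DecidableEq C] (μ : Ω → ℝ) (X : Ω → A) (Y : Ω → B) (Z : Ω → C) :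
    cmi μ X Y Z - mi μ X Y
      = Hent μ (fun ω => (X ω, Y ω)) + Hent μ (fun ω => (X ω, Z ω))
        + Hent μ (fun ω => (Y ω, Z ω)) - Hent μ (fun ω => (X ω, Y ω, Z ω))
        - Hent μ X - Hent μ Y - Hent μ Z := by
  unfold cmi mi
  ring

end Aux

/-- Strong symmetry: if a real-valued function `R` on ordered triples of
distinct indices of `{1,2,3}` satisfies weak symmetry I (`R i j k = R j i k`) and weak
symmetry II (`R i k j = R j k i`), then `R` takes a common value `r` on all six triples,
and the synergy `S(i,j,k) = I(Xi;Xj|Xk) − (I(Xi;Xj) − r)` is permutation invariant and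
equals `r − I(X1;X2;X3)` where `I(X1;X2;X3)` is the co-information. -/
theorem statement3 {Ω : Type*} [Fintype Ω] {S : Fin 3 → Type*}
    [∀ i, Fintype (S i)] [∀ i, DecidableEq (S i)]
    (μ : Ω → ℝ) (hμ : IsPMF μ) (X : ∀ i, Ω → S i)
    (R : Fin 3 → Fin 3 → Fin 3 → ℝ)
    (hsym1 : ∀ i j k : Fin 3, i ≠ j → j ≠ k → i ≠ k → R i j k = R j i k)
    (hsym2 : ∀ i j k : Fin 3, i ≠ j → j ≠ k → i ≠ k → R i k j = R j k i) :
    ∃ r : ℝ,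
      (∀ i j k : Fin 3, i ≠ j → j ≠ k → i ≠ k → R i j k = r) ∧
      (∀ i j k : Fin 3, i ≠ j → j ≠ k → i ≠ k →
        cmi μ (X i) (X j) (X k) - (mi μ (X i) (X j) - r)
          = r - (mi μ (X 0) (X 1) - cmi μ (X 0) (X 1) (X 2))) := by
  refine ⟨R 0 1 2, ?_, ?_⟩
  · have h1 : R 1 0 2 = R 0 1 2 := (hsym1 0 1 2 (by decide) (by decide) (by decide)).symm
    have h2 : R 2 1 0 = R 0 1 2 := (hsym2 0 2 1 (by decide) (by decide) (by decide)).symm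
    have h3 : R 1 2 0 = R 0 1 2 := by
      rw [← h2]; exact (hsym1 2 1 0 (by decide) (by decide) (by decide)).symm
    have h4 : R 0 2 1 = R 0 1 2 := by
      rw [← h3]; exact (hsym2 1 0 2 (by decide) (by decide) (by decide)).symm
    have h5 : R 2 0 1 = R 0 1 2 := by
      rw [← h4]; exact (hsym1 0 2 1 (by decide) (by decide) (by decide)).symm
    intro i j k hij hjk hik
    fin_cases i <;> fin_cases j <;> fin_cases k <;>
      first
        | exact absurd rfl hij
        | exact absurd rfl hjk
        | exact absurd rfl hik
        | rfl
        | exact h1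
        | exact h2
        | exact h3
        | exact h4
        | exact h5
  · have p01 := hent_pair_comm μ (X 0) (X 1)
    have p02 := hent_pair_comm μ (X 0) (X 2)
    have p12 := hent_pair_comm μ (X 1) (X 2)
    have t102 := hent_triple_swap12 μ (X 0) (X 1) (X 2)
    have t021 := hent_triple_swap23 μ (X 0) (X 1) (X 2)
    have t120 := hent_triple_swap23 μ (X 1) (X 0) (X 2)
    have t201 := hent_triple_swap12 μ (X 0) (X 2) (X 1)
    have t210 := hent_triple_swap12 μ (X 1) (X 2) (X 0)
    intro i j k hij hjk hik
    have key : cmi μ (X i) (X j) (X k) - mi μ (X i) (X j)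
        = cmi μ (X 0) (X 1) (X 2) - mi μ (X 0) (X 1) := by
      have hi : i = 0 ∨ i = 1 ∨ i = 2 := by omega
      have hj : j = 0 ∨ j = 1 ∨ j = 2 := by omega
      have hk : k = 0 ∨ k = 1 ∨ k = 2 := by omega
      rcases hi with rfl | rfl | rfl <;> rcases hj with rfl | rfl | rfl <;>
          rcases hk with rfl | rfl | rfl <;>
        first
          | exact absurd rfl hij
          | exact absurd rfl hjk
          | exact absurd rfl hik
          | rfl
          | (rw [cmi_sub_mi_symm, cmi_sub_mi_symm]; linarith)
    linarith
end

section
/- (Bounds for a symmetric information decomposition.) Let X1, X2, X3 be random variables on a common probability space with values in finite sets, and let r be a real number satisfying the symmetric-decomposition axioms: r ≥ 0, I(Xi;Xj) − r ≥ 0 for every pair i ≠ j, and I(Xi,Xj;Xk) ≥ r + (I(Xi;Xk) − r) + (I(Xj;Xk) − r) for every permutation {i,j,k} = {1,2,3}. Then: (a) min{I(X1;X2), I(X2;X3), I(X1;X3)} ≥ r ≥ max{I(X1;X2;X3), 0}; (b) min{I(X1;X3), I(X1;X3|X2)} ≥ I(X1;X3) − r ≥ 0; (c) min{I(X1;X2|X3),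 I(X2;X3|X1), I(X1;X3|X2)} ≥ S ≥ max{−I(X1;X2;X3), 0}, where S := I(X1;X2|X3) − (I(X1;X2) − r). -/
open Finset

lemma Hent_comp_equiv {Ω : Type*} [Fintype Ω] {S T : Type*}
    [Fintype S] [DecidableEq S] [Fintype T] [DecidableEq T]
    (μ : Ω → ℝ) (e : S ≃ T) (X : Ω → S) :
    Hent μ (fun ω => e (X ω)) = Hent μ X := by
  unfold Hent prob
  rw [← Equiv.sum_comp e]
  congr 1
  apply Finset.sum_congr rfl
  intro x _
  have h : (∑ ω, if e (X ω) = e x then μ ω else 0) = ∑ ω, if X ω = x then μ ω else 0 := by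
    apply Finset.sum_congr rfl
    intro ω _
    simp [e.injective.eq_iff]
  rw [h]

/-- Bounds for a symmetric information decomposition: if `r` satisfies the
symmetric-decomposition axioms, then (a) `min{I(X1;X2),I(X2;X3),I(X1;X3)} ≥ r ≥
max{I(X1;X2;X3),0}`; (b) `min{I(X1;X3),I(X1;X3|X2)} ≥ I(X1;X3) − r ≥ 0`; (c)
`min{I(X1;X2|X3),I(X2;X3|X1),I(X1;X3|X2)} ≥ S ≥ max{−I(X1;X2;X3),0}` with
`S = I(X1;X2|X3) − (I(X1;X2) − r)`. -/
theorem statement4 {Ω S1 S2 S3 : Type*} [Fintype Ω]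
    [Fintype S1] [DecidableEq S1] [Fintype S2] [DecidableEq S2] [Fintype S3] [DecidableEq S3]
    (μ : Ω → ℝ) (hμ : IsPMF μ) (X1 : Ω → S1) (X2 : Ω → S2) (X3 : Ω → S3) (r : ℝ)
    (hr0 : 0 ≤ r)
    (hu12 : 0 ≤ mi μ X1 X2 - r)
    (hu23 : 0 ≤ mi μ X2 X3 - r)
    (hu13 : 0 ≤ mi μ X1 X3 - r)
    (hs3 : r + (mi μ X1 X3 - r) + (mi μ X2 X3 - r) ≤ mi μ (fun ω => (X1 ω, X2 ω)) X3)
    (hs2 : r + (mi μ X1 X2 - r) + (mi μ X2 X3 - r) ≤ mi μ (fun ω => (X1 ω, X3 ω)) X2)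
    (hs1 : r + (mi μ X1 X2 - r) + (mi μ X1 X3 - r) ≤ mi μ (fun ω => (X2 ω, X3 ω)) X1) :
    (r ≤ min (mi μ X1 X2) (min (mi μ X2 X3) (mi μ X1 X3)) ∧
        max (mi μ X1 X2 - cmi μ X1 X2 X3) 0 ≤ r) ∧
      (mi μ X1 X3 - r ≤ min (mi μ X1 X3) (cmi μ X1 X3 X2) ∧ 0 ≤ mi μ X1 X3 - r) ∧
      (cmi μ X1 X2 X3 - (mi μ X1 X2 - r)
            ≤ min (cmi μ X1 X2 X3) (min (cmi μ X2 X3 X1) (cmi μ X1 X3 X2)) ∧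
        max (-(mi μ X1 X2 - cmi μ X1 X2 X3)) 0 ≤ cmi μ X1 X2 X3 - (mi μ X1 X2 - r)) := by
  have h21 : Hent μ (fun ω => (X2 ω, X1 ω)) = Hent μ (fun ω => (X1 ω, X2 ω)) :=
    Hent_comp_equiv μ (Equiv.prodComm S1 S2) (fun ω => (X1 ω, X2 ω))
  have h31 : Hent μ (fun ω => (X3 ω, X1 ω)) = Hent μ (fun ω => (X1 ω, X3 ω)) :=
    Hent_comp_equiv μ (Equiv.prodComm S1 S3) (fun ω => (X1 ω, X3 ω))
  have h32 : Hent μ (fun ω => (X3 ω, X2 ω)) = Hent μ (fun ω => (X2 ω, X3 ω)) :=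
    Hent_comp_equiv μ (Equiv.prodComm S2 S3) (fun ω => (X2 ω, X3 ω))
  have e1 : Hent μ (fun ω => ((X1 ω, X2 ω), X3 ω)) = Hent μ (fun ω => (X1 ω, X2 ω, X3 ω)) := by
    have := Hent_comp_equiv μ ((Equiv.prodAssoc S1 S2 S3).symm) (fun ω => (X1 ω, X2 ω, X3 ω))
    simpa [Equiv.prodAssoc] using this
  have e2 : Hent μ (fun ω => ((X1 ω, X3 ω), X2 ω)) = Hent μ (fun ω => (X1 ω, X2 ω, X3 ω)) := by
    have := Hent_comp_equiv μ
      (((Equiv.refl S1).prodCongr (Equiv.prodComm S2 S3)).trans (Equiv.prodAssoc S1 S3 S2).symm)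
      (fun ω => (X1 ω, X2 ω, X3 ω))
    simpa using this
  have e3 : Hent μ (fun ω => ((X2 ω, X3 ω), X1 ω)) = Hent μ (fun ω => (X1 ω, X2 ω, X3 ω)) :=
    Hent_comp_equiv μ (Equiv.prodComm S1 (S2 × S3)) (fun ω => (X1 ω, X2 ω, X3 ω))
  have e4 : Hent μ (fun ω => (X2 ω, X3 ω, X1 ω)) = Hent μ (fun ω => (X1 ω, X2 ω, X3 ω)) := by
    have := Hent_comp_equiv μ
      (⟨fun p => (p.2.1, p.2.2, p.1), fun q => (q.2.2, q.1, q.2.1), fun _ => rfl, fun _ => rfl⟩ :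
        S1 × S2 × S3 ≃ S2 × S3 × S1)
      (fun ω => (X1 ω, X2 ω, X3 ω))
    simpa [Equiv.coe_fn_mk] using this
  have e5 : Hent μ (fun ω => (X1 ω, X3 ω, X2 ω)) = Hent μ (fun ω => (X1 ω, X2 ω, X3 ω)) := by
    have := Hent_comp_equiv μ
      (⟨fun p => (p.1, p.2.2, p.2.1), fun q => (q.1, q.2.2, q.2.1), fun _ => rfl, fun _ => rfl⟩ :
        S1 × S2 × S3 ≃ S1 × S3 × S2)
      (fun ω => (X1 ω, X2 ω, X3 ω))
    simpa [Equiv.coe_fn_mk] using this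
  simp only [mi, cmi] at *
  constructor
  · constructor
    · refine le_min (by linarith) (le_min (by linarith) (by linarith))
    · apply max_le <;> linarith
  constructor
  · exact ⟨le_min (by linarith) (by linarith), by linarith⟩
  · constructor
    · refine le_min (by linarith) (le_min (by linarith) (by linarith))
    · apply max_le <;> linarith
end

section
/- (Uniqueness of symmetric information decompositions.) Let X1, X2, X3 be random variables on a common probability space with values in finite sets, and suppose that at least one of the six quantities I(X1;X2), I(X2;X3), I(X1;X3), I(X1;X2|X3), I(X2;X3|X1), I(X1;X3|X2) equals zero (i.e., two of the variables are pairwise independent, or the three variables form a Markov chain in some order). Then min{I(X1;X2), I(X2;X3), I(X1;X3)} = max{I(X1;X2;X3), 0}; consequently there is exactly one real number r with min{I(X1;X2), I(X2;X3), I(X1;X3)} ≥ r ≥ max{I(X1;X2;X3), 0}, i.e., the shared information of any symmetric information decomposition is uniquely determined. -/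
open Finset

lemma prob_nonneg {Ω : Type*} [Fintype Ω] {S : Type*} [DecidableEq S]
    {μ : Ω → ℝ} (hμ : IsPMF μ) (X : Ω → S) (x : S) : 0 ≤ prob μ X x :=
  Finset.sum_nonneg fun ω _ => by split <;> simp [hμ.1 ω]

lemma sum_prob {Ω : Type*} [Fintype Ω] {S : Type*} [Fintype S] [DecidableEq S]
    {μ : Ω → ℝ} (hμ : IsPMF μ) (X : Ω → S) : ∑ x, prob μ X x = 1 := by
  unfold prob
  rw [Finset.sum_comm]
  simp only [Finset.sum_ite_eq, Finset.mem_univ, if_true]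
  exact hμ.2

lemma Hent_comp {Ω S S' : Type*} [Fintype Ω] [Fintype S] [DecidableEq S]
    [Fintype S'] [DecidableEq S'] (μ : Ω → ℝ) (X : Ω → S) (e : S → S')
    (he : Function.Injective e) :
    Hent μ (fun ω => e (X ω)) = Hent μ X := by
  unfold Hent
  congr 1
  have h0 : ∀ s' ∈ Finset.univ, s' ∉ Finset.univ.image e →
      prob μ (fun ω => e (X ω)) s' * Real.log (prob μ (fun ω => e (X ω)) s') = 0 := by
    intro s' _ hs'
    have : prob μ (fun ω => e (X ω)) s' = 0 := by
      apply Finset.sum_eq_zero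
      intro ω _
      rw [if_neg]
      intro hc
      exact hs' (Finset.mem_image.mpr ⟨X ω, Finset.mem_univ _, hc⟩)
    simp [this]
  rw [← Finset.sum_subset (Finset.subset_univ (Finset.univ.image e)) h0,
    Finset.sum_image (fun a _ b _ h => he h)]
  apply Finset.sum_congr rfl
  intro s _
  have : prob μ (fun ω => e (X ω)) (e s) = prob μ X s := by
    unfold prob
    apply Finset.sum_congr rfl
    intro ω _
    simp [he.eq_iff]
  rw [this]

lemma prob_margin {Ω S T U : Type*} [Fintype Ω] [Fintype S] [DecidableEq S]
    [Fintype T] [DecidableEq T] [Fintype U] [DecidableEq U]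
    (μ : Ω → ℝ) (X : Ω → S) (Y : Ω → T) (Z : Ω → U) (x : S) (z : U) :
    prob μ (fun ω => (X ω, Z ω)) (x, z)
      = ∑ y, prob μ (fun ω => (X ω, Y ω, Z ω)) (x, y, z) := by
  unfold prob
  rw [Finset.sum_comm]
  apply Finset.sum_congr rfl
  intro ω _
  simp [Prod.ext_iff, ite_and, Finset.sum_ite_eq]

lemma prob_margin2 {Ω S T U : Type*} [Fintype Ω] [Fintype S] [DecidableEq S]
    [Fintype T] [DecidableEq T] [Fintype U] [DecidableEq U]
    (μ : Ω → ℝ) (X : Ω → S) (Y : Ω → T) (Z : Ω → U) (y : T) (z : U) :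
    prob μ (fun ω => (Y ω, Z ω)) (y, z)
      = ∑ x, prob μ (fun ω => (X ω, Y ω, Z ω)) (x, y, z) := by
  unfold prob
  rw [Finset.sum_comm]
  apply Finset.sum_congr rfl
  intro ω _
  simp [Prod.ext_iff, ite_and, Finset.sum_ite_eq]

lemma prob_margin_snd {Ω T U : Type*} [Fintype Ω]
    [Fintype T] [DecidableEq T] [Fintype U] [DecidableEq U]
    (μ : Ω → ℝ) (Y : Ω → T) (Z : Ω → U) (z : U) :
    prob μ Z z = ∑ y, prob μ (fun ω => (Y ω, Z ω)) (y, z) := by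
  unfold prob
  rw [Finset.sum_comm]
  apply Finset.sum_congr rfl
  intro ω _
  simp [Prod.ext_iff, ite_and, Finset.sum_ite_eq]

lemma prob_margin3 {Ω S T U : Type*} [Fintype Ω] [Fintype S] [DecidableEq S]
    [Fintype T] [DecidableEq T] [Fintype U] [DecidableEq U]
    (μ : Ω → ℝ) (X : Ω → S) (Y : Ω → T) (Z : Ω → U) (z : U) :
    prob μ Z z = ∑ x, ∑ y, prob μ (fun ω => (X ω, Y ω, Z ω)) (x, y, z) := by
  rw [prob_margin_snd μ Y Z z, Finset.sum_comm]
  exact Finset.sum_congr rfl fun y _ => prob_margin2 μ X Y Z y z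

lemma key_pt (p q s r : ℝ) (hp : 0 ≤ p) (hpq : p ≤ q) (hps : p ≤ s)
    (hqr : q ≤ r) (hsr : s ≤ r) :
    p - q * s / r ≤ p * (Real.log p + Real.log r - Real.log q - Real.log s) := by
  rcases eq_or_lt_of_le hp with h0 | h0
  · rw [← h0]
    have hq : 0 ≤ q := h0.le.trans hpq
    have hs : 0 ≤ s := h0.le.trans hps
    have hr : 0 ≤ r := hq.trans hqr
    have : 0 ≤ q * s / r := by positivity
    simp
    linarith
  · have hq : 0 < q := h0.trans_le hpq
    have hs : 0 < s := h0.trans_le hps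
    have hr : 0 < r := hq.trans_le hqr
    have hlog : Real.log (q * s / (p * r)) ≤ q * s / (p * r) - 1 :=
      Real.log_le_sub_one_of_pos (by positivity)
    rw [Real.log_div (by positivity) (by positivity),
      Real.log_mul (ne_of_gt hq) (ne_of_gt hs),
      Real.log_mul (ne_of_gt h0) (ne_of_gt hr)] at hlog
    have h2 := mul_le_mul_of_nonneg_left hlog hp
    have h3 : p * (q * s / (p * r) - 1) = q * s / r - p := by
      field_simp
    rw [h3] at h2
    nlinarith

lemma reorder231 {S T U : Type*} [Fintype S] [Fintype T] [Fintype U] (f : S → T → U → ℝ) :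
    ∑ x, ∑ y, ∑ z, f x y z = ∑ y, ∑ z, ∑ x, f x y z :=
  (Finset.sum_comm).trans (Finset.sum_congr rfl fun _ _ => Finset.sum_comm)

lemma reorder312 {S T U : Type*} [Fintype S] [Fintype T] [Fintype U] (f : S → T → U → ℝ) :
    ∑ x, ∑ y, ∑ z, f x y z = ∑ z, ∑ x, ∑ y, f x y z :=
  (Finset.sum_congr rfl fun _ _ => Finset.sum_comm).trans Finset.sum_comm

lemma cmi_nonneg {Ω S T U : Type*} [Fintype Ω] [Fintype S] [DecidableEq S]
    [Fintype T] [DecidableEq T] [Fintype U] [DecidableEq U]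
    {μ : Ω → ℝ} (hμ : IsPMF μ) (X : Ω → S) (Y : Ω → T) (Z : Ω → U) :
    0 ≤ cmi μ X Y Z := by
  let p : S → T → U → ℝ := fun x y z => prob μ (fun ω => (X ω, Y ω, Z ω)) (x, y, z)
  let q : S → U → ℝ := fun x z => ∑ y, p x y z
  let s : T → U → ℝ := fun y z => ∑ x, p x y z
  let r : U → ℝ := fun z => ∑ x, ∑ y, p x y z
  have hpnn : ∀ x y z, 0 ≤ p x y z := fun x y z => prob_nonneg hμ _ _
  have hrs : ∀ z, r z = ∑ y, s y z := fun z => Finset.sum_comm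
  have hrq : ∀ z, r z = ∑ x, q x z := fun z => rfl
  -- entropy rewrites
  have hHXZ : Hent μ (fun ω => (X ω, Z ω))
      = -∑ x, ∑ y, ∑ z, p x y z * Real.log (q x z) := by
    unfold Hent
    congr 1
    calc ∑ v : S × U, prob μ (fun ω => (X ω, Z ω)) v
            * Real.log (prob μ (fun ω => (X ω, Z ω)) v)
        = ∑ x, ∑ z, prob μ (fun ω => (X ω, Z ω)) (x, z)
            * Real.log (prob μ (fun ω => (X ω, Z ω)) (x, z)) := Fintype.sum_prod_type _
      _ = ∑ x, ∑ z, ∑ y, p x y z * Real.log (q x z) := by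
          apply Finset.sum_congr rfl; intro x _
          apply Finset.sum_congr rfl; intro z _
          rw [prob_margin μ X Y Z x z]
          exact Finset.sum_mul _ _ _
      _ = ∑ x, ∑ y, ∑ z, p x y z * Real.log (q x z) :=
          Finset.sum_congr rfl fun _ _ => Finset.sum_comm
  have hHYZ : Hent μ (fun ω => (Y ω, Z ω))
      = -∑ x, ∑ y, ∑ z, p x y z * Real.log (s y z) := by
    unfold Hent
    congr 1
    rw [reorder231 (fun x y z => p x y z * Real.log (s y z))]
    calc ∑ v : T × U, prob μ (fun ω => (Y ω, Z ω)) v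
            * Real.log (prob μ (fun ω => (Y ω, Z ω)) v)
        = ∑ y, ∑ z, prob μ (fun ω => (Y ω, Z ω)) (y, z)
            * Real.log (prob μ (fun ω => (Y ω, Z ω)) (y, z)) := Fintype.sum_prod_type _
      _ = ∑ y, ∑ z, ∑ x, p x y z * Real.log (s y z) := by
          apply Finset.sum_congr rfl; intro y _
          apply Finset.sum_congr rfl; intro z _
          rw [prob_margin2 μ X Y Z y z]
          exact Finset.sum_mul _ _ _
  have hHZ : Hent μ Z = -∑ x, ∑ y, ∑ z, p x y z * Real.log (r z) := by
    unfold Hent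
    congr 1
    rw [reorder312 (fun x y z => p x y z * Real.log (r z))]
    apply Finset.sum_congr rfl; intro z _
    rw [prob_margin3 μ X Y Z z]
    rw [Finset.sum_mul]
    apply Finset.sum_congr rfl; intro x _
    exact Finset.sum_mul _ _ _
  have hHXYZ : Hent μ (fun ω => (X ω, Y ω, Z ω))
      = -∑ x, ∑ y, ∑ z, p x y z * Real.log (p x y z) := by
    unfold Hent
    congr 1
    rw [Fintype.sum_prod_type]
    apply Finset.sum_congr rfl; intro x _
    exact Fintype.sum_prod_type _
  -- cmi as a single triple sum
  have hcmi : cmi μ X Y Z = ∑ x, ∑ y, ∑ z, p x y z *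
      (Real.log (p x y z) + Real.log (r z) - Real.log (q x z) - Real.log (s y z)) := by
    have hsplit : ∑ x, ∑ y, ∑ z, p x y z *
        (Real.log (p x y z) + Real.log (r z) - Real.log (q x z) - Real.log (s y z))
        = (∑ x, ∑ y, ∑ z, p x y z * Real.log (p x y z))
          + (∑ x, ∑ y, ∑ z, p x y z * Real.log (r z))
          - (∑ x, ∑ y, ∑ z, p x y z * Real.log (q x z))
          - (∑ x, ∑ y, ∑ z, p x y z * Real.log (s y z)) := by
      simp only [mul_add, mul_sub, Finset.sum_add_distrib, Finset.sum_sub_distrib]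
    unfold cmi
    rw [hHXZ, hHYZ, hHZ, hHXYZ, hsplit]
    ring
  -- lower bound on each term
  have hbd : ∀ x y z, p x y z - q x z * s y z / r z ≤ p x y z *
      (Real.log (p x y z) + Real.log (r z) - Real.log (q x z) - Real.log (s y z)) := by
    intro x y z
    apply key_pt
    · exact hpnn x y z
    · exact Finset.single_le_sum (fun y' _ => hpnn x y' z) (Finset.mem_univ y)
    · exact Finset.single_le_sum (fun x' _ => hpnn x' y z) (Finset.mem_univ x)
    · exact Finset.single_le_sum
        (fun x' _ => Finset.sum_nonneg fun y' _ => hpnn x' y' z) (Finset.mem_univ x)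
    · rw [hrs z]
      exact Finset.single_le_sum
        (fun y' _ => Finset.sum_nonneg fun x' _ => hpnn x' y' z) (Finset.mem_univ y)
  -- total probability equals 1
  have htot : ∑ x, ∑ y, ∑ z, p x y z = 1 := by
    have := sum_prob hμ (fun ω => (X ω, Y ω, Z ω))
    rw [Fintype.sum_prod_type] at this
    rw [← this]
    apply Finset.sum_congr rfl; intro x _
    exact (Fintype.sum_prod_type
      (fun v : T × U => prob μ (fun ω => (X ω, Y ω, Z ω)) (x, v))).symm
  -- sum of the lower bounds is ≥ 0
  have hqs : ∑ x, ∑ y, ∑ z, q x z * s y z / r z ≤ 1 := by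
    rw [reorder312 (fun x y z => q x z * s y z / r z)]
    have hz : ∀ z, ∑ x, ∑ y, q x z * s y z / r z = r z * r z / r z := by
      intro z
      have h1 : ∀ x, ∑ y, q x z * s y z / r z = q x z * r z / r z := by
        intro x
        rw [← Finset.sum_div, ← Finset.mul_sum, ← hrs z]
      calc ∑ x, ∑ y, q x z * s y z / r z = ∑ x, q x z * r z / r z :=
            Finset.sum_congr rfl fun x _ => h1 x
        _ = (∑ x, q x z) * r z / r z := by rw [← Finset.sum_div, ← Finset.sum_mul]
        _ = r z * r z / r z := by rw [← hrq z]
    have hz2' : ∀ t : ℝ, 0 ≤ t → t * t / t ≤ t := by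
      intro t ht
      rcases eq_or_lt_of_le ht with h0 | h0
      · rw [← h0]; simp
      · rw [mul_div_assoc, div_self (ne_of_gt h0), mul_one]
    have hz2 : ∀ z, r z * r z / r z ≤ r z := fun z =>
      hz2' (r z) (Finset.sum_nonneg fun x _ => Finset.sum_nonneg fun y _ => hpnn x y z)
    calc ∑ z, ∑ x, ∑ y, q x z * s y z / r z = ∑ z, r z * r z / r z :=
          Finset.sum_congr rfl fun z _ => hz z
      _ ≤ ∑ z, r z := Finset.sum_le_sum fun z _ => hz2 z
      _ = 1 := by rw [← htot]; exact (reorder312 fun x y z => p x y z).symm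
  have hlower : (1:ℝ) - ∑ x, ∑ y, ∑ z, q x z * s y z / r z ≤ cmi μ X Y Z := by
    rw [hcmi]
    have : ∑ x, ∑ y, ∑ z, (p x y z - q x z * s y z / r z)
        ≤ ∑ x, ∑ y, ∑ z, p x y z *
          (Real.log (p x y z) + Real.log (r z) - Real.log (q x z) - Real.log (s y z)) := by
      apply Finset.sum_le_sum; intro x _
      apply Finset.sum_le_sum; intro y _
      apply Finset.sum_le_sum; intro z _
      exact hbd x y z
    calc (1:ℝ) - ∑ x, ∑ y, ∑ z, q x z * s y z / r z
        = ∑ x, ∑ y, ∑ z, (p x y z - q x z * s y z / r z) := by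
          simp only [Finset.sum_sub_distrib]
          rw [htot]
      _ ≤ _ := this
  linarith

lemma Hent_const {Ω : Type*} [Fintype Ω] {μ : Ω → ℝ} (hμ : IsPMF μ) :
    Hent μ (fun _ => (() : Unit)) = 0 := by
  unfold Hent prob
  simp [hμ.2]

lemma mi_nonneg {Ω S T : Type*} [Fintype Ω] [Fintype S] [DecidableEq S]
    [Fintype T] [DecidableEq T] {μ : Ω → ℝ} (hμ : IsPMF μ) (X : Ω → S) (Y : Ω → T) :
    0 ≤ mi μ X Y := by
  have h := cmi_nonneg hμ X Y (fun _ => (() : Unit))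
  unfold cmi at h
  unfold mi
  have e1 : Hent μ (fun ω => (X ω, ())) = Hent μ X :=
    Hent_comp μ X (fun a => (a, ())) (fun a b h => by simpa using h)
  have e2 : Hent μ (fun ω => (Y ω, ())) = Hent μ Y :=
    Hent_comp μ Y (fun a => (a, ())) (fun a b h => by simpa using h)
  have e3 : Hent μ (fun ω => (X ω, Y ω, ())) = Hent μ (fun ω => (X ω, Y ω)) :=
    Hent_comp μ (fun ω => (X ω, Y ω)) (fun a => (a.1, a.2, ()))
      (fun a b h => by simpa [Prod.ext_iff] using h)
  rw [e1, e2, e3, Hent_const hμ] at h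
  linarith

lemma Hent_pair_comm {Ω S T : Type*} [Fintype Ω] [Fintype S] [DecidableEq S]
    [Fintype T] [DecidableEq T] (μ : Ω → ℝ) (A : Ω → S) (B : Ω → T) :
    Hent μ (fun ω => (A ω, B ω)) = Hent μ (fun ω => (B ω, A ω))
 := by
  have := Hent_comp μ (fun ω => (B ω, A ω)) (fun v => (v.2, v.1))
    (fun a b h => by simpa [Prod.ext_iff, and_comm] using h)
  simpa using this

lemma coinfo_rot {Ω S1 S2 S3 : Type*} [Fintype Ω]
    [Fintype S1] [DecidableEq S1] [Fintype S2] [DecidableEq S2]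
    [Fintype S3] [DecidableEq S3]
    (μ : Ω → ℝ) (X1 : Ω → S1) (X2 : Ω → S2) (X3 : Ω → S3) :
    mi μ X1 X2 - cmi μ X1 X2 X3 = mi μ X2 X3 - cmi μ X2 X3 X1 := by
  unfold mi cmi
  have h12 : Hent μ (fun ω => (X2 ω, X1 ω)) = Hent μ (fun ω => (X1 ω, X2 ω)) :=
    Hent_pair_comm μ X2 X1
  have h13 : Hent μ (fun ω => (X3 ω, X1 ω)) = Hent μ (fun ω => (X1 ω, X3 ω)) :=
    Hent_pair_comm μ X3 X1
  have h123 : Hent μ (fun ω => (X2 ω, X3 ω, X1 ω))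
      = Hent μ (fun ω => (X1 ω, X2 ω, X3 ω)) :=
    Hent_comp μ (fun ω => (X1 ω, X2 ω, X3 ω))
      (fun a => (a.2.1, a.2.2, a.1)) (fun a b h => by simp [Prod.ext_iff] at h ⊢; tauto)
  rw [h12, h13, h123]
  ring

lemma coinfo_swap {Ω S1 S2 S3 : Type*} [Fintype Ω]
    [Fintype S1] [DecidableEq S1] [Fintype S2] [DecidableEq S2]
    [Fintype S3] [DecidableEq S3]
    (μ : Ω → ℝ) (X1 : Ω → S1) (X2 : Ω → S2) (X3 : Ω → S3) :
    mi μ X1 X2 - cmi μ X1 X2 X3 = mi μ X1 X3 - cmi μ X1 X3 X2 := by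
  unfold mi cmi
  have h23 : Hent μ (fun ω => (X3 ω, X2 ω)) = Hent μ (fun ω => (X2 ω, X3 ω)) :=
    Hent_pair_comm μ X3 X2
  have h123 : Hent μ (fun ω => (X1 ω, X3 ω, X2 ω))
      = Hent μ (fun ω => (X1 ω, X2 ω, X3 ω)) :=
    Hent_comp μ (fun ω => (X1 ω, X2 ω, X3 ω))
      (fun a => (a.1, a.2.2, a.2.1)) (fun a b h => by simp [Prod.ext_iff] at h ⊢; tauto)
  rw [h23, h123]
  ring

/-- Uniqueness of symmetric information decompositions: if one of the three
mutual informations or three conditional mutual informations vanishes, then the upper and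
lower bounds for the shared information coincide, so there is exactly one real number `r`
between them. -/
theorem statement6 {Ω S1 S2 S3 : Type*} [Fintype Ω]
    [Fintype S1] [DecidableEq S1] [Fintype S2] [DecidableEq S2] [Fintype S3] [DecidableEq S3]
    (μ : Ω → ℝ) (hμ : IsPMF μ) (X1 : Ω → S1) (X2 : Ω → S2) (X3 : Ω → S3)
    (h : mi μ X1 X2 = 0 ∨ mi μ X2 X3 = 0 ∨ mi μ X1 X3 = 0 ∨
      cmi μ X1 X2 X3 = 0 ∨ cmi μ X2 X3 X1 = 0 ∨ cmi μ X1 X3 X2 = 0) :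
    min (mi μ X1 X2) (min (mi μ X2 X3) (mi μ X1 X3))
        = max (mi μ X1 X2 - cmi μ X1 X2 X3) 0 ∧
      ∃! r : ℝ, max (mi μ X1 X2 - cmi μ X1 X2 X3) 0 ≤ r ∧
        r ≤ min (mi μ X1 X2) (min (mi μ X2 X3) (mi μ X1 X3)) := by
  have ha := mi_nonneg hμ X1 X2
  have hb := mi_nonneg hμ X2 X3
  have hc := mi_nonneg hμ X1 X3
  have hc1 := cmi_nonneg hμ X1 X2 X3
  have hc2 := cmi_nonneg hμ X2 X3 X1
  have hc3 := cmi_nonneg hμ X1 X3 X2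
  have hrot := coinfo_rot μ X1 X2 X3
  have hswap := coinfo_swap μ X1 X2 X3
  set a := mi μ X1 X2
  set b := mi μ X2 X3
  set c := mi μ X1 X3
  set co := a - cmi μ X1 X2 X3 with hco
  have hub : max co 0 ≤ min a (min b c) := by
    apply max_le
    · apply le_min
      · linarith
      apply le_min <;> linarith
    · apply le_min
      · exact ha
      exact le_min hb hc
  have hlb : min a (min b c) ≤ max co 0 := by
    have m1 : min a (min b c) ≤ a := min_le_left _ _
    have m2 : min a (min b c) ≤ b := (min_le_right _ _).trans (min_le_left _ _)
    have m3 : min a (min b c) ≤ c := (min_le_right _ _).trans (min_le_right _ _)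
    have x1 : co ≤ max co 0 := le_max_left _ _
    have x2 : (0:ℝ) ≤ max co 0 := le_max_right _ _
    rcases h with h | h | h | h | h | h <;> linarith
  have heq : min a (min b c) = max co 0 := le_antisymm hlb hub
  refine ⟨heq, max co 0, ⟨le_refl _, heq.ge⟩, ?_⟩
  intro y hy
  exact le_antisymm (hy.2.trans heq.le) hy.1
end

section
/- (Pairwise maximum entropy distributions minimize synergy.) Let p and q be two probability distributions of a triple (X1, X2, X3) of variables over finite sets, and suppose p and q have identical pairwise marginal distributions: p_{X1X2} = q_{X1X2}, p_{X1X3} = q_{X1X3}, and p_{X2X3} = q_{X2X3}. Then H_p(X1,X2,X3) + I_p(X2;X3|X1) = H_q(X1,X2,X3) + I_q(X2;X3|X1), where subscripts indicate the distribution under which the quantities are computed. Consequently, if p maximizes the joint entropy among all distributions with these pairwise marginals, then p minimizes the conditional mutual information I(X2;X3|X1) (and hence the synergistic information, whose difference from I(X2;X3|X1) depends only on the pairwise marginals) among them. -/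
open Finset

/-- A probability mass function on a finite set. -/
def IsDist {A : Type*} [Fintype A] (p : A → ℝ) : Prop :=
  (∀ a, 0 ≤ p a) ∧ ∑ a, p a = 1

/-- Shannon entropy (natural logarithm) of a distribution on a finite set. -/
noncomputable def ent {A : Type*} [Fintype A] (p : A → ℝ) : ℝ :=
  -∑ a, p a * Real.log (p a)

/-- Marginal of a distribution of `(X1,X2,X3)` on the pair `(X1,X2)`. -/
def marg12 {S1 S2 S3 : Type*} [Fintype S3] (p : S1 × S2 × S3 → ℝ) : S1 × S2 → ℝ :=
  fun y => ∑ x3, p (y.1, y.2, x3)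

/-- Marginal of a distribution of `(X1,X2,X3)` on the pair `(X1,X3)`. -/
def marg13 {S1 S2 S3 : Type*} [Fintype S2] (p : S1 × S2 × S3 → ℝ) : S1 × S3 → ℝ :=
  fun y => ∑ x2, p (y.1, x2, y.2)

/-- Marginal of a distribution of `(X1,X2,X3)` on the pair `(X2,X3)`. -/
def marg23 {S1 S2 S3 : Type*} [Fintype S1] (p : S1 × S2 × S3 → ℝ) : S2 × S3 → ℝ :=
  fun y => ∑ x1, p (x1, y.1, y.2)

/-- Marginal of a distribution of `(X1,X2,X3)` on `X1`. -/
def marg1 {S1 S2 S3 : Type*} [Fintype S2] [Fintype S3] (p : S1 × S2 × S3 → ℝ) :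
    S1 → ℝ :=
  fun x1 => ∑ y : S2 × S3, p (x1, y.1, y.2)

/-- Marginal of a distribution of `(X1,X2,X3)` on `X2`. -/
def marg2 {S1 S2 S3 : Type*} [Fintype S1] [Fintype S3] (p : S1 × S2 × S3 → ℝ) :
    S2 → ℝ :=
  fun x2 => ∑ y : S1 × S3, p (y.1, x2, y.2)

/-- Conditional mutual information `I_p(X2;X3|X1)` of a distribution `p` of `(X1,X2,X3)`,
computed as `H_p(X1,X2) + H_p(X1,X3) − H_p(X1,X2,X3) − H_p(X1)`. -/
noncomputable def cmi23given1 {S1 S2 S3 : Type*} [Fintype S1] [Fintype S2] [Fintype S3]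
    (p : S1 × S2 × S3 → ℝ) : ℝ :=
  ent (marg12 p) + ent (marg13 p) - ent p - ent (marg1 p)

/-- Conditional mutual information `I_p(X1;X3|X2)` of a distribution `p` of `(X1,X2,X3)`,
computed as `H_p(X1,X2) + H_p(X2,X3) − H_p(X1,X2,X3) − H_p(X2)`. -/
noncomputable def cmi13given2 {S1 S2 S3 : Type*} [Fintype S1] [Fintype S2] [Fintype S3]
    (p : S1 × S2 × S3 → ℝ) : ℝ :=
  ent (marg12 p) + ent (marg23 p) - ent p - ent (marg2 p)


lemma marg1_eq_of_marg12 {S1 S2 S3 : Type*} [Fintype S1] [Fintype S2] [Fintype S3]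
    (p q : S1 × S2 × S3 → ℝ) (h12 : marg12 p = marg12 q) : marg1 p = marg1 q := by
  funext x1
  have h : ∀ x2, marg12 p (x1, x2) = marg12 q (x1, x2) := fun x2 => by rw [h12]
  simp only [marg12] at h
  simp only [marg1, Fintype.sum_prod_type]
  exact Finset.sum_congr rfl fun x2 _ => h x2

lemma key {S1 S2 S3 : Type*} [Fintype S1] [Fintype S2] [Fintype S3]
    (p q : S1 × S2 × S3 → ℝ)
    (h12 : marg12 p = marg12 q) (h13 : marg13 p = marg13 q) :
    ent p + cmi23given1 p = ent q + cmi23given1 q := by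
  have h1 := marg1_eq_of_marg12 p q h12
  simp only [cmi23given1, h12, h13, h1]
  ring

/-- Pairwise maximum entropy distributions minimize synergy: if `p` and `q`
have identical pairwise marginals then `H_p + I_p(X2;X3|X1) = H_q + I_q(X2;X3|X1)`;
consequently, if `p` maximizes the joint entropy among all distributions with its pairwise
marginals, then `p` minimizes `I(X2;X3|X1)` among them. -/
theorem statement11 {S1 S2 S3 : Type*} [Fintype S1] [Fintype S2] [Fintype S3]
    (p q : S1 × S2 × S3 → ℝ) (hp : IsDist p) (hq : IsDist q)
    (h12 : marg12 p = marg12 q) (h13 : marg13 p = marg13 q) (h23 : marg23 p = marg23 q) :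
    ent p + cmi23given1 p = ent q + cmi23given1 q ∧
      ((∀ q' : S1 × S2 × S3 → ℝ, IsDist q' → marg12 q' = marg12 p →
          marg13 q' = marg13 p → marg23 q' = marg23 p → ent q' ≤ ent p) →
        ∀ q' : S1 × S2 × S3 → ℝ, IsDist q' → marg12 q' = marg12 p →
          marg13 q' = marg13 p → marg23 q' = marg23 p →
          cmi23given1 p ≤ cmi23given1 q') := by
  refine ⟨key p q h12 h13, fun hmax q' hq' h12' h13' h23' => ?_⟩
  have hk := key q' p h12' h13'
  have hle := hmax q' hq' h12' h13' h23'
  linarith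
end

section
/- Let p be a probability distribution of a triple (X1, X2, X3) over finite sets, and let Q denote the set of all probability distributions on the same product of finite sets having the same three pairwise marginals as p. Then I_p(X2;X3|X1) − min_{q∈Q} I_q(X2;X3|X1) = max_{q∈Q} H_q(X1,X2,X3) − H_p(X1,X2,X3); i.e., the synergistic contribution of the conditional mutual information beyond its minimum over Q equals the entropy gap ΔH^(3) between p and the pairwise maximum entropy distribution. (Both the minimum and the maximum are attained since Q is a nonempty compact set and entropy and conditional mutual information are continuous on it.) -/
open Finset

lemma marg1_from_marg12 {S1 S2 S3 : Type*} [Fintype S2] [Fintype S3]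
    (q : S1 × S2 × S3 → ℝ) : marg1 q = fun x1 => ∑ x2, marg12 q (x1, x2) := by
  funext x1
  simp [marg1, marg12, Fintype.sum_prod_type]

lemma continuous_ent {A : Type*} [Fintype A] : Continuous (ent (A := A)) := by
  unfold ent
  exact (continuous_finset_sum _ fun a _ =>
    Real.continuous_mul_log.comp (continuous_apply a)).neg

lemma cmi_eq_const_sub_ent {S1 S2 S3 : Type*} [Fintype S1] [Fintype S2] [Fintype S3]
    (p q : S1 × S2 × S3 → ℝ) (h12 : marg12 q = marg12 p) (h13 : marg13 q = marg13 p) :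
    cmi23given1 q = (ent (marg12 p) + ent (marg13 p) - ent (marg1 p)) - ent q := by
  have h1 : marg1 q = marg1 p := by
    rw [marg1_from_marg12, marg1_from_marg12, h12]
  rw [cmi23given1, h12, h13, h1]; ring

/-- over the (nonempty compact) set `Q` of distributions with the same
pairwise marginals as `p`, the minimum `m` of `I(X2;X3|X1)` and the maximum `M` of the
joint entropy are attained, and `I_p(X2;X3|X1) − m = M − H_p`, i.e. the synergistic
contribution of the conditional mutual information beyond its minimum over `Q` equals
the entropy gap `ΔH⁽³⁾` to the pairwise maximum entropy distribution. -/
theorem statement12 {S1 S2 S3 : Type*} [Fintype S1] [Fintype S2] [Fintype S3]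
    (p : S1 × S2 × S3 → ℝ) (hp : IsDist p) :
    ∃ m M : ℝ,
      IsLeast ((fun q => cmi23given1 q) ''
        {q : S1 × S2 × S3 → ℝ | IsDist q ∧ marg12 q = marg12 p ∧
          marg13 q = marg13 p ∧ marg23 q = marg23 p}) m ∧
      IsGreatest ((fun q => ent q) ''
        {q : S1 × S2 × S3 → ℝ | IsDist q ∧ marg12 q = marg12 p ∧
          marg13 q = marg13 p ∧ marg23 q = marg23 p}) M ∧
      cmi23given1 p - m = M - ent p := by
  classical
  set Q : Set (S1 × S2 × S3 → ℝ) :=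
    {q : S1 × S2 × S3 → ℝ | IsDist q ∧ marg12 q = marg12 p ∧
      marg13 q = marg13 p ∧ marg23 q = marg23 p} with hQ
  have hpQ : p ∈ Q := ⟨hp, rfl, rfl, rfl⟩
  -- Q is compact
  have hQsub : Q ⊆ Set.pi Set.univ (fun _ : S1 × S2 × S3 => Set.Icc (0:ℝ) 1) := by
    intro q hq a _
    refine ⟨hq.1.1 a, ?_⟩
    calc q a ≤ ∑ b, q b := Finset.single_le_sum (fun b _ => hq.1.1 b) (Finset.mem_univ a)
    _ = 1 := hq.1.2
  have hclosed : IsClosed Q := by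
    have h1 : IsClosed {q : S1 × S2 × S3 → ℝ | ∀ a, 0 ≤ q a} := by
      have : {q : S1 × S2 × S3 → ℝ | ∀ a, 0 ≤ q a} =
          ⋂ a, {q : S1 × S2 × S3 → ℝ | 0 ≤ q a} := by ext q; simp
      rw [this]
      exact isClosed_iInter fun a => isClosed_le continuous_const (continuous_apply a)
    have h2 : IsClosed {q : S1 × S2 × S3 → ℝ | ∑ a, q a = 1} :=
      isClosed_eq (continuous_finset_sum _ fun a _ => continuous_apply a) continuous_const
    have c12 : Continuous (marg12 (S1 := S1) (S2 := S2) (S3 := S3)) := by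
      refine continuous_pi fun y => continuous_finset_sum _ fun x3 _ => continuous_apply _
    have c13 : Continuous (marg13 (S1 := S1) (S2 := S2) (S3 := S3)) := by
      refine continuous_pi fun y => continuous_finset_sum _ fun x2 _ => continuous_apply _
    have c23 : Continuous (marg23 (S1 := S1) (S2 := S2) (S3 := S3)) := by
      refine continuous_pi fun y => continuous_finset_sum _ fun x1 _ => continuous_apply _
    have h3 : IsClosed {q : S1 × S2 × S3 → ℝ | marg12 q = marg12 p} :=
      isClosed_eq c12 continuous_const
    have h4 : IsClosed {q : S1 × S2 × S3 → ℝ | marg13 q = marg13 p} :=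
      isClosed_eq c13 continuous_const
    have h5 : IsClosed {q : S1 × S2 × S3 → ℝ | marg23 q = marg23 p} :=
      isClosed_eq c23 continuous_const
    have : Q = ({q : S1 × S2 × S3 → ℝ | ∀ a, 0 ≤ q a} ∩
        {q | ∑ a, q a = 1}) ∩ ({q | marg12 q = marg12 p} ∩
        ({q | marg13 q = marg13 p} ∩ {q | marg23 q = marg23 p})) := by
      ext q
      simp only [hQ, Set.mem_setOf_eq, Set.mem_inter_iff, IsDist]
    rw [this]
    exact ((h1.inter h2).inter (h3.inter (h4.inter h5)))
  have hcompact : IsCompact Q :=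
    IsCompact.of_isClosed_subset (isCompact_univ_pi fun _ => isCompact_Icc) hclosed hQsub
  obtain ⟨q0, hq0Q, hq0max⟩ :=
    hcompact.exists_isMaxOn ⟨p, hpQ⟩ continuous_ent.continuousOn
  set C : ℝ := ent (marg12 p) + ent (marg13 p) - ent (marg1 p) with hC
  refine ⟨C - ent q0, ent q0, ?_, ?_, ?_⟩
  · constructor
    · exact ⟨q0, hq0Q, by show cmi23given1 q0 = C - ent q0; rw [cmi_eq_const_sub_ent p q0 hq0Q.2.1 hq0Q.2.2.1]⟩
    · rintro x ⟨q, hqQ, rfl⟩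
      show C - ent q0 ≤ cmi23given1 q
      rw [cmi_eq_const_sub_ent p q hqQ.2.1 hqQ.2.2.1]
      have := hq0max hqQ
      simp only [Set.mem_setOf_eq] at this
      linarith
  · exact ⟨⟨q0, hq0Q, rfl⟩, by rintro x ⟨q, hqQ, rfl⟩; exact hq0max hqQ⟩
  · rw [cmi_eq_const_sub_ent p p rfl rfl]; ring
end
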